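/- Assume the relative quality functions satisfy q_j(A) = 1/(n·C(n−1,|A|)) for every j ∈ C and A ⊆ C∖{j}. Then for every nonempty M ⊆ C and k ∈ {1,…,m}, p_M^{(k)} = ∑_{A⊆C, |M∩A|=m−k+1} ((m−k+1)/(n·C(n−1,|A|−1)))·φ(A) − ∑_{A⊆C, |M∩A|=m−k} (k/(n·C(n−1,|A|)))·φ(A). -/

import Mathlib

open MeasureTheory Finset

/-- Lifetime of the (sub)system on component set `D` with structure function `χ`
(the maximum over the sets `A ⊆ D` with `χ A = 1` of `min_{i ∈ A} T i`). -/
noncomputable def sysLifeOn {Ω : Type*} {n : ℕ} (T : Fin n → Ω → ℝ)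
    (D : Finset (Fin n)) (χ : Finset (Fin n) → ℝ) (ω : Ω) : ℝ :=
  if h : (D.powerset.filter fun A => χ A = 1).Nonempty then
    (D.powerset.filter fun A => χ A = 1).sup' h
      (fun A => if hA : A.Nonempty then A.inf' hA fun i => T i ω else 0)
  else 0

/-- The `k`-th order statistic of the lifetimes `(T i)_{i ∈ M}`. -/
noncomputable def orderStat {Ω : Type*} {n : ℕ} (T : Fin n → Ω → ℝ)
    (M : Finset (Fin n)) (k : ℕ) (ω : Ω) : ℝ :=
  ((M.val.map fun i => T i ω).sort (· ≤ ·)).getD (k - 1) 0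

/-- The relative quality function `q_j(A) = Pr(max_{i ∈ C∖A} T_i = T_j < min_{i ∈ A} T_i)`. -/
noncomputable def relQual {Ω : Type*} [MeasurableSpace Ω] {n : ℕ} (μ : Measure Ω)
    (T : Fin n → Ω → ℝ) (j : Fin n) (A : Finset (Fin n)) : ℝ :=
  (μ {ω | (∀ i ∉ A, T i ω ≤ T j ω) ∧ ∀ i ∈ A, T j ω < T i ω}).toReal

/-!
On the event that no two lifetimes coincide, which has full probability, write `A_j` for the
set of components outliving `j`. The system fails at `T j` exactly when `j` is critical for
`A_j` (`φ A_j = 0` but `φ (A_j ∪ {j}) = 1`), and `T j` is the `k`-th order statistic of `M`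
exactly when `j ∈ M` and `|M ∩ A_j| = m - k`. The event `A_j = A` is the one measured by
`q_j(A)`, and these events are a.e. disjoint over the admissible pairs `(A, j)`, so
`p_M^{(k)} = ∑ q_j(A) (φ (A ∪ {j}) - φ A)` over `|M ∩ A| = m - k`, `j ∈ M \ A`. Substituting
`q_j(A)`, the term `φ A` occurs `|M \ A| = k` times, and `φ B` with `|M ∩ B| = m - k + 1`
occurs once for each of the `m - k + 1` ways to write `B = A ∪ {j}` with `j ∈ M ∩ B`.
-/

theorem Finset.card_filter_orderEmbOfFin_lt {α : Type*} [LinearOrder α] (s : Finset α) {k : ℕ}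
    (h : #s = k) (i : Fin k) : #{x ∈ s | s.orderEmbOfFin h i < x} = k - 1 - i := by
  have hs : ∀ x, x ∈ s ↔ ∃ j, s.orderEmbOfFin h j = x := fun x => by
    rw [← mem_coe, ← range_orderEmbOfFin s h, Set.mem_range]
  have : {x ∈ s | s.orderEmbOfFin h i < x} = (Ioi i).map (s.orderEmbOfFin h).toEmbedding := by
    ext x
    simp only [mem_filter, hs, mem_map, mem_Ioi, RelEmbedding.coe_toEmbedding]
    constructor
    · rintro ⟨⟨j, rfl⟩, hij⟩
      exact ⟨j, (s.orderEmbOfFin h).lt_iff_lt.1 hij, rfl⟩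
    · rintro ⟨j, hij, rfl⟩
      exact ⟨⟨j, rfl⟩, (s.orderEmbOfFin h).lt_iff_lt.2 hij⟩
  rw [this, card_map, Fin.card_Ioi]

theorem Finset.orderEmbOfFin_eq_iff_card_filter_lt {α : Type*} [LinearOrder α] {s : Finset α}
    {k : ℕ} (h : #s = k) (i : Fin k) {x : α} (hx : x ∈ s) :
    s.orderEmbOfFin h i = x ↔ #{y ∈ s | x < y} = k - 1 - i := by
  obtain ⟨i', rfl⟩ : x ∈ Set.range (s.orderEmbOfFin h) := by simpa using hx
  rw [card_filter_orderEmbOfFin_lt, (s.orderEmbOfFin h).injective.eq_iff, Fin.ext_iff]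
  omega

theorem ae_injective_of_measure_eq_zero {Ω ι β : Type*} [MeasurableSpace Ω] [Countable ι]
    {μ : Measure Ω} {X : ι → Ω → β} (h : ∀ i j, i ≠ j → μ {ω | X i ω = X j ω} = 0) :
    ∀ᵐ ω ∂μ, Function.Injective (X · ω) := by
  simp only [Function.Injective, ae_all_iff]
  intro i j
  by_cases hij : i = j
  · exact .of_forall fun _ _ => hij
  · exact (measure_eq_zero_iff_ae_notMem.1 (h i j hij)).mono fun _ hω h' => absurd h' hω

section CriticalPairs

variable {α : Type*} [Fintype α] [DecidableEq α]

theorem Finset.sum_sum_sdiff_insert {β : Type*} [AddCommMonoid β] (M : Finset α) (r : ℕ)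
    (g : Finset α → Finset α → β) :
    ∑ A ∈ univ.powerset.filter (fun A => #(M ∩ A) = r), ∑ j ∈ M \ A, g A (insert j A) =
      ∑ B ∈ univ.powerset.filter (fun B => #(M ∩ B) = r + 1), ∑ j ∈ M ∩ B, g (B.erase j) B := by
  rw [sum_sigma', sum_sigma']
  refine sum_nbij' (fun p => ⟨insert p.2 p.1, p.2⟩) (fun p => ⟨p.1.erase p.2, p.2⟩)
    ?_ ?_ ?_ ?_ ?_
  · rintro ⟨A, j⟩ h
    simp only [mem_sigma, mem_filter, mem_powerset, subset_univ, true_and, mem_sdiff,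
      mem_inter, mem_insert_self, and_true] at h ⊢
    rw [inter_insert_of_mem h.2.1, card_insert_of_notMem (by simp [h.2.2]), h.1]
    exact ⟨rfl, h.2.1⟩
  · rintro ⟨B, j⟩ h
    simp only [mem_sigma, mem_filter, mem_powerset, subset_univ, true_and, mem_sdiff,
      mem_inter, notMem_erase, not_false_eq_true, and_true] at h ⊢
    rw [inter_erase, card_erase_of_mem (mem_inter.2 h.2), h.1]
    exact ⟨rfl, h.2.1⟩
  · rintro ⟨A, j⟩ h
    simp only [mem_sigma, mem_sdiff] at h
    simp [erase_insert h.2.2]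
  · rintro ⟨B, j⟩ h
    simp only [mem_sigma, mem_inter] at h
    simp [insert_erase h.2.2]
  · rintro ⟨A, j⟩ h
    simp only [mem_sigma, mem_sdiff] at h
    simp [erase_insert h.2.2]

noncomputable def criticalPairs (M : Finset α) (r : ℕ) (φ : Finset α → ℝ) :
    Finset (Σ _ : Finset α, α) :=
  ((univ.powerset.filter fun A => #(M ∩ A) = r).sigma (M \ ·)).filter
    fun p => φ p.1 = 0 ∧ φ (insert p.2 p.1) = 1

theorem mem_criticalPairs {M : Finset α} {r : ℕ} {φ : Finset α → ℝ} {A : Finset α} {j : α} :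
    ⟨A, j⟩ ∈ criticalPairs M r φ ↔
      #(M ∩ A) = r ∧ j ∈ M ∧ j ∉ A ∧ φ A = 0 ∧ φ (insert j A) = 1 := by
  simp [criticalPairs, and_assoc]

theorem sum_criticalPairs {φ : Finset α → ℝ} (hφ01 : ∀ A, φ A = 0 ∨ φ A = 1)
    (hφmono : Monotone φ) (M : Finset α) {k : ℕ} (hkm : k ≤ #M) (c : ℕ → ℝ) :
    ∑ p ∈ criticalPairs M (#M - k) φ, c #p.1 =
      ∑ B ∈ univ.powerset.filter (fun B => #(M ∩ B) = #M - k + 1),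
        ((#M - k + 1 : ℕ) : ℝ) * c (#B - 1) * φ B -
      ∑ A ∈ univ.powerset.filter (fun A => #(M ∩ A) = #M - k), (k : ℝ) * c #A * φ A := by
  have hcrit : ∀ A B, A ⊆ B → (if φ A = 0 ∧ φ B = 1 then (1 : ℝ) else 0) = φ B - φ A :=
    fun A B hAB => by
      rcases hφ01 A with hA | hA <;> rcases hφ01 B with hB | hB
      · simp [hA, hB]
      · simp [hA, hB]
      · linarith [hφmono hAB]
      · simp [hA, hB]
  calc ∑ p ∈ criticalPairs M (#M - k) φ, c #p.1
      = ∑ A ∈ univ.powerset.filter (fun A => #(M ∩ A) = #M - k), ∑ j ∈ M \ A,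
          (c #A * φ (insert j A) - c #A * φ A) := by
        rw [criticalPairs, sum_filter, sum_sigma']
        refine sum_congr rfl fun p _ => ?_
        rw [← mul_sub, ← hcrit _ _ (subset_insert p.2 p.1), mul_ite, mul_one, mul_zero]
    _ = _ := by
        simp only [sum_sub_distrib, sum_sum_sdiff_insert M (#M - k) fun A B => c #A * φ B]
        congr 1
        · refine sum_congr rfl fun B hB => ?_
          rw [mem_filter] at hB
          rw [sum_congr rfl fun j hj => by rw [card_erase_of_mem (mem_inter.1 hj).2], sum_const,
            hB.2, nsmul_eq_mul, mul_assoc]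
        · refine sum_congr rfl fun A hA => ?_
          rw [mem_filter] at hA
          have : #(M \ A) = k := by
            have := card_sdiff_add_card_inter M A
            omega
          rw [sum_const, this, nsmul_eq_mul, mul_assoc]

end CriticalPairs

section Lifetimes

variable {Ω : Type*} {n : ℕ}

noncomputable def workingSet (T : Fin n → Ω → ℝ) (ω : Ω) (t : ℝ) : Finset (Fin n) :=
  {i | t < T i ω}

def relQualEvent (T : Fin n → Ω → ℝ) (j : Fin n) (A : Finset (Fin n)) : Set Ω :=
  {ω | (∀ i ∉ A, T i ω ≤ T j ω) ∧ ∀ i ∈ A, T j ω < T i ω}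

variable {T : Fin n → Ω → ℝ} {ω : Ω} {M : Finset (Fin n)} {k : ℕ}

@[simp]
theorem mem_workingSet {t : ℝ} {i : Fin n} : i ∈ workingSet T ω t ↔ t < T i ω := by
  simp [workingSet]

theorem mem_relQualEvent_iff {j : Fin n} {A : Finset (Fin n)} :
    ω ∈ relQualEvent T j A ↔ workingSet T ω (T j ω) = A := by
  simp only [relQualEvent, Set.mem_ofPred_eq, Finset.ext_iff, mem_workingSet]
  constructor
  · rintro ⟨hle, hlt⟩ i
    exact ⟨fun h => by_contra fun hi => (hle i hi).not_gt h, hlt i⟩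
  · intro h
    exact ⟨fun i hi => not_lt.1 fun h' => hi ((h i).1 h'), fun i hi => (h i).2 hi⟩

theorem measurableSet_relQualEvent [MeasurableSpace Ω] (hT : ∀ i, Measurable (T i))
    (j : Fin n) (A : Finset (Fin n)) : MeasurableSet (relQualEvent T j A) := by
  simp only [relQualEvent, Set.ofPred_and, Set.ofPred_forall]
  exact (MeasurableSet.iInter fun i => .iInter fun _ => measurableSet_le (hT i) (hT j)).inter
    (MeasurableSet.iInter fun i => .iInter fun _ => measurableSet_lt (hT j) (hT i))

theorem orderStat_eq_orderEmbOfFin (hinj : Set.InjOn (T · ω) M) (hk1 : 1 ≤ k) (hkm : k ≤ #M) :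
    orderStat T M k ω =
      (M.image (T · ω)).orderEmbOfFin (card_image_of_injOn hinj) ⟨k - 1, by omega⟩ := by
  simp only [orderStat, orderEmbOfFin_apply, ← sort_val, image_val_of_injOn hinj]
  exact List.getD_eq_getElem _ _ _

theorem exists_mem_orderStat_eq (hinj : Set.InjOn (T · ω) M) (hk1 : 1 ≤ k) (hkm : k ≤ #M) :
    ∃ j ∈ M, orderStat T M k ω = T j ω := by
  have := orderEmbOfFin_mem _ (card_image_of_injOn hinj) ⟨k - 1, by omega⟩
  rw [← orderStat_eq_orderEmbOfFin hinj hk1 hkm, mem_image] at this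
  obtain ⟨j, hj, hjT⟩ := this
  exact ⟨j, hj, hjT.symm⟩

theorem orderStat_eq_iff (hinj : Set.InjOn (T · ω) M) (hk1 : 1 ≤ k) (hkm : k ≤ #M) {j : Fin n}
    (hj : j ∈ M) : orderStat T M k ω = T j ω ↔ #(M ∩ workingSet T ω (T j ω)) = #M - k := by
  rw [workingSet, inter_filter, inter_univ, orderStat_eq_orderEmbOfFin hinj hk1 hkm,
    orderEmbOfFin_eq_iff_card_filter_lt _ _ (mem_image_of_mem _ hj), filter_image,
    card_image_of_injOn (hinj.mono (filter_subset _ _))]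
  dsimp only
  omega

variable {φ : Finset (Fin n) → ℝ}

theorem orderStat_eq_of_mem_criticalPairs (hinj : Function.Injective (T · ω)) (hk1 : 1 ≤ k)
    (hkm : k ≤ #M) {A : Finset (Fin n)} {j : Fin n} (hp : ⟨A, j⟩ ∈ criticalPairs M (#M - k) φ)
    (hω : ω ∈ relQualEvent T j A) : orderStat T M k ω = T j ω := by
  rw [mem_criticalPairs] at hp
  rw [orderStat_eq_iff hinj.injOn hk1 hkm hp.2.1, mem_relQualEvent_iff.1 hω, hp.1]

variable (hφ01 : ∀ A, φ A = 0 ∨ φ A = 1) (hφmono : Monotone φ)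
  (hφempty : φ ∅ = 0) (hφfull : φ univ = 1)
include hφ01 hφmono hφempty hφfull

theorem sysLifeOn_univ_mem_iff {P : Set ℝ} [DecidablePred (· ∈ P)] (hP : IsUpperSet P) :
    sysLifeOn T univ φ ω ∈ P ↔ φ {i | T i ω ∈ P} = 1 := by
  have hne : (univ.powerset.filter fun A => φ A = 1).Nonempty := ⟨univ, by simp [hφfull]⟩
  have hpath_ne : ∀ {A}, φ A = 1 → A.Nonempty := fun hA =>
    nonempty_iff_ne_empty.2 fun h => by simp [h, hφempty] at hA
  have hinf_mem {A : Finset (Fin n)} (hA : A.Nonempty) :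
      A.inf' hA (T · ω) ∈ P ↔ ∀ i ∈ A, T i ω ∈ P := by
    refine ⟨fun h i hi => hP (inf'_le _ hi) h, fun h => ?_⟩
    obtain ⟨i, hi, hieq⟩ := exists_mem_eq_inf' hA (T · ω)
    exact hieq ▸ h i hi
  set f : Finset (Fin n) → ℝ := fun A => if hA : A.Nonempty then A.inf' hA (T · ω) else 0
  have hf {A : Finset (Fin n)} (hA : A.Nonempty) : f A = A.inf' hA (T · ω) := dif_pos hA
  rw [sysLifeOn, dif_pos hne]
  constructor
  · intro h
    obtain ⟨A, hA, hAeq⟩ := exists_mem_eq_sup' hne f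
    rw [mem_filter] at hA
    rw [hAeq, hf (hpath_ne hA.2), hinf_mem] at h
    have hle := hφmono (show A ⊆ ({i | T i ω ∈ P} : Finset (Fin n)) from
      fun i hi => by simpa using h i hi)
    rcases hφ01 {i | T i ω ∈ P} with h0 | h1
    · linarith [hA.2]
    · exact h1
  · intro h
    refine hP (le_sup' f (b := {i | T i ω ∈ P})
      (mem_filter.2 ⟨mem_powerset.2 (subset_univ _), h⟩)) ?_
    rw [hf (hpath_ne h), hinf_mem]
    exact fun i hi => (mem_filter.1 hi).2

theorem sysLifeOn_univ_eq_iff (hinj : Function.Injective (T · ω)) (j : Fin n) :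
    sysLifeOn T univ φ ω = T j ω ↔
      φ (workingSet T ω (T j ω)) = 0 ∧ φ (insert j (workingSet T ω (T j ω))) = 1 := by
  have hgt : ({i | T i ω ∈ Set.Ioi (T j ω)} : Finset (Fin n)) = workingSet T ω (T j ω) := by
    ext i
    simp
  have hge : ({i | T i ω ∈ Set.Ici (T j ω)} : Finset (Fin n)) =
      insert j (workingSet T ω (T j ω)) := by
    ext i
    simp only [mem_filter, mem_univ, true_and, mem_insert, mem_workingSet, Set.mem_Ici,
      le_iff_lt_or_eq, hinj.eq_iff]
    tauto
  have hlt := sysLifeOn_univ_mem_iff hφ01 hφmono hφempty hφfull (T := T) (ω := ω)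
    (isUpperSet_Ioi (T j ω))
  have hle := sysLifeOn_univ_mem_iff hφ01 hφmono hφempty hφfull (T := T) (ω := ω)
    (isUpperSet_Ici (T j ω))
  rw [hgt, Set.mem_Ioi] at hlt
  rw [hge, Set.mem_Ici] at hle
  rw [le_antisymm_iff, ← not_lt, hlt, hle]
  rcases hφ01 (workingSet T ω (T j ω)) with h | h <;> simp [h]

theorem sysLifeOn_eq_orderStat_iff (hinj : Function.Injective (T · ω)) (hk1 : 1 ≤ k)
    (hkm : k ≤ #M) :
    sysLifeOn T univ φ ω = orderStat T M k ω ↔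
      ∃ p ∈ criticalPairs M (#M - k) φ, ω ∈ relQualEvent T p.2 p.1 := by
  constructor
  · intro h
    obtain ⟨j, hjM, hj⟩ := exists_mem_orderStat_eq hinj.injOn hk1 hkm
    obtain ⟨h0, h1⟩ := (sysLifeOn_univ_eq_iff hφ01 hφmono hφempty hφfull hinj j).1 (h.trans hj)
    refine ⟨⟨workingSet T ω (T j ω), j⟩, mem_criticalPairs.2 ⟨?_, hjM, by simp, h0, h1⟩,
      mem_relQualEvent_iff.2 rfl⟩
    exact (orderStat_eq_iff hinj.injOn hk1 hkm hjM).1 hj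
  · rintro ⟨⟨A, j⟩, hp, hω⟩
    rw [orderStat_eq_of_mem_criticalPairs hinj hk1 hkm hp hω,
      sysLifeOn_univ_eq_iff hφ01 hφmono hφempty hφfull hinj, mem_relQualEvent_iff.1 hω]
    exact (mem_criticalPairs.1 hp).2.2.2

theorem toReal_measure_sysLifeOn_eq_orderStat [MeasurableSpace Ω] {μ : Measure Ω}
    [IsFiniteMeasure μ] (hT : ∀ i, Measurable (T i))
    (hinj : ∀ᵐ ω ∂μ, Function.Injective (T · ω)) (hk1 : 1 ≤ k) (hkm : k ≤ #M) :
    (μ {ω | sysLifeOn T univ φ ω = orderStat T M k ω}).toReal =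
      ∑ p ∈ criticalPairs M (#M - k) φ, relQual μ T p.2 p.1 := by
  have hunion : {ω | sysLifeOn T univ φ ω = orderStat T M k ω} =ᵐ[μ]
      ⋃ p ∈ criticalPairs M (#M - k) φ, relQualEvent T p.2 p.1 := by
    refine Filter.eventuallyEq_set.2 ?_
    filter_upwards [hinj] with ω hω
    simpa using sysLifeOn_eq_orderStat_iff hφ01 hφmono hφempty hφfull hω hk1 hkm
  rw [measure_congr hunion, measure_biUnion_finset₀,
    ENNReal.toReal_sum fun _ _ => measure_ne_top _ _]
  · rfl
  · -- without ties, `j` is the `k`-th order statistic of `M` and `A` the set outliving it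
    rintro ⟨A, j⟩ hp ⟨B, j'⟩ hq hpq
    refine measure_mono_null ?_ (ae_iff.1 hinj)
    rintro ω ⟨hωp, hωq⟩ hω
    refine hpq ?_
    obtain rfl : j = j' := hω <|
      (orderStat_eq_of_mem_criticalPairs hω hk1 hkm hp hωp).symm.trans
        (orderStat_eq_of_mem_criticalPairs hω hk1 hkm hq hωq)
    rw [mem_relQualEvent_iff] at hωp hωq
    dsimp only at hωp hωq
    rw [← hωp, ← hωq]
  · exact fun p _ => (measurableSet_relQualEvent hT _ _).nullMeasurableSet

end Lifetimes

theorem stmt_10_general {Ω : Type*} [MeasurableSpace Ω] (μ : Measure Ω) [IsProbabilityMeasure μ]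
    {n : ℕ} (T : Fin n → Ω → ℝ) (hTmeas : ∀ i, Measurable (T i))
    (hties : ∀ i j : Fin n, i ≠ j → μ {ω | T i ω = T j ω} = 0)
    (φ : Finset (Fin n) → ℝ)
    (hφ01 : ∀ A, φ A = 0 ∨ φ A = 1)
    (hφmono : ∀ A B : Finset (Fin n), A ⊆ B → φ A ≤ φ B)
    (hφempty : φ ∅ = 0) (hφfull : φ Finset.univ = 1)
    (hq : ∀ (j : Fin n) (A : Finset (Fin n)), j ∉ A →
      relQual μ T j A = 1 / ((n : ℝ) * ((n - 1).choose A.card : ℕ)))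
    (M : Finset (Fin n)) (k : ℕ) (hk1 : 1 ≤ k) (hkm : k ≤ M.card) :
    (μ {ω | sysLifeOn T Finset.univ φ ω = orderStat T M k ω}).toReal =
      (∑ A ∈ (Finset.univ : Finset (Fin n)).powerset.filter
          (fun A => (M ∩ A).card = M.card - k + 1),
        (((M.card - k + 1 : ℕ) : ℝ) / ((n : ℝ) * ((n - 1).choose (A.card - 1) : ℕ))) * φ A)
      -
      (∑ A ∈ (Finset.univ : Finset (Fin n)).powerset.filter
          (fun A => (M ∩ A).card = M.card - k),
        ((k : ℝ) / ((n : ℝ) * ((n - 1).choose A.card : ℕ))) * φ A) := by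
  rw [toReal_measure_sysLifeOn_eq_orderStat hφ01 hφmono hφempty hφfull hTmeas
      (ae_injective_of_measure_eq_zero hties) hk1 hkm,
    sum_congr rfl fun p hp => hq p.2 p.1 (mem_criticalPairs.1 hp).2.2.1]
  exact (sum_criticalPairs hφ01 hφmono M hkm fun s => 1 / ((n : ℝ) * ((n - 1).choose s : ℕ))).trans
    (by simp only [mul_one_div])

theorem stmt_10 {Ω : Type*} [MeasurableSpace Ω] (μ : Measure Ω) [IsProbabilityMeasure μ]
    {n : ℕ} (T : Fin n → Ω → ℝ) (hTmeas : ∀ i, Measurable (T i))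
    (hTnonneg : ∀ i ω, 0 ≤ T i ω)
    (hties : ∀ i j : Fin n, i ≠ j → μ {ω | T i ω = T j ω} = 0)
    (φ : Finset (Fin n) → ℝ)
    (hφ01 : ∀ A, φ A = 0 ∨ φ A = 1)
    (hφmono : ∀ A B : Finset (Fin n), A ⊆ B → φ A ≤ φ B)
    (hφempty : φ ∅ = 0) (hφfull : φ Finset.univ = 1)
    (hq : ∀ (j : Fin n) (A : Finset (Fin n)), j ∉ A →
      relQual μ T j A = 1 / ((n : ℝ) * ((n - 1).choose A.card : ℕ)))
    (M : Finset (Fin n)) (hM : M.Nonempty) (k : ℕ) (hk1 : 1 ≤ k) (hkm : k ≤ M.card) :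
    (μ {ω | sysLifeOn T Finset.univ φ ω = orderStat T M k ω}).toReal =
      (∑ A ∈ (Finset.univ : Finset (Fin n)).powerset.filter
          (fun A => (M ∩ A).card = M.card - k + 1),
        (((M.card - k + 1 : ℕ) : ℝ) / ((n : ℝ) * ((n - 1).choose (A.card - 1) : ℕ))) * φ A)
      -
      (∑ A ∈ (Finset.univ : Finset (Fin n)).powerset.filter
          (fun A => (M ∩ A).card = M.card - k),
        ((k : ℝ) / ((n : ℝ) * ((n - 1).choose A.card : ℕ))) * φ A) :=
  stmt_10_general μ T hTmeas hties φ hφ01 hφmono hφempty hφfull hq M k hk1 hkm
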